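/- Let F satisfy Assumption 2 and a > 0, and let b_F and g be the unique constant and the unique differentiable solution on ℝ of g'(x) = a·x² − b_F − F(g(x)) with x·g(x) ≤ 0 for all x ∈ ℝ. Then there exists a constant K > 0 such that |g(x)| ≤ K·(1 + |x|) and |g'(x)| ≤ K for all x ∈ ℝ. -/

import Mathlib

/-- Assumption 2 on the function `F`. -/
structure Assumption2 (F : ℝ → ℝ) : Prop where
  convex : ConvexOn ℝ Set.univ F
  diff : Differentiable ℝ F
  even : ∀ x : ℝ, F (-x) = F x
  strictMonoOn : StrictMonoOn F (Set.Ici 0)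
  map_zero : F 0 = 0
  deriv_diffOn : ∀ x ∈ Set.Ici (0 : ℝ), DifferentiableAt ℝ (deriv F) x
  deriv_strictMonoOn : StrictMonoOn (deriv F) (Set.Ici 0)
  deriv_zero : deriv F 0 = 0
  growth : ∃ K > (0 : ℝ), ∃ p : ℝ, 2 ≤ p ∧ ∀ x : ℝ, F x ≤ K * (1 + |x| ^ p)
  second_deriv_lb : ∃ C > (0 : ℝ), ∃ x₀ > (0 : ℝ), ∀ x : ℝ, x₀ < |x| → C < deriv (deriv F) x

/-!
For `x ≥ 0` the sign condition gives `g ≤ 0`; the case `x ≤ 0` follows by applying the same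
bounds to `x ↦ -g (-x)`, which solves the same equation because `F` is even.

Since `F'' > C̃` far out, `F` grows at least quadratically, so below a line `-L (1 + x)` with `L`
large the equation gives `g' ≤ -(c/2) g²`. The line is then a barrier: a solution that crosses it
stays below it and blows up to `-∞` in finite time.

Differentiating the equation, `u = g'` satisfies `u' = 2 a x - F'(g) u`. As `F'(g) ≤ 0`, `u` cannot
come down to a positive level once above it, so `u > 0` at some point would force `g → +∞`. At a
level `-μ` with `μ` large, convexity (`F(g) ≤ g F'(g)`) and the linear bound on `g` give `u' < 0`,
so `u < -μ` at some point would keep `g' ≤ -μ` forever and push `g` below the line `-L (1 + x)`.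
-/

open Set

theorem image_le_of_deriv_lt_deriv_boundary_Ici {f f' B B' : ℝ → ℝ} {a : ℝ}
    (hf : ∀ x, HasDerivAt f (f' x) x) (hB : ∀ x, HasDerivAt B (B' x) x) (ha : f a < B a)
    (bound : ∀ x, a < x → f x = B x → f' x < B' x) {x : ℝ} (hx : a ≤ x) : f x ≤ B x :=
  image_le_of_deriv_right_lt_deriv_boundary (b := x)
    (fun y _ => (hf y).continuousAt.continuousWithinAt) (fun y _ => (hf y).hasDerivWithinAt)
    ha.le hB (fun y hy hfy => bound y (hy.1.lt_of_ne (by rintro rfl; exact ha.ne hfy)) hfy)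
    ⟨hx, le_rfl⟩

theorem mul_sub_le_sub_of_le_deriv_Ici {f : ℝ → ℝ} {x₁ C : ℝ}
    (hf : ∀ x, x₁ ≤ x → DifferentiableAt ℝ f x) (hC : ∀ x, x₁ < x → C ≤ deriv f x) {x : ℝ}
    (hx : x₁ ≤ x) : C * (x - x₁) ≤ f x - f x₁ :=
  (convex_Ici x₁).mul_sub_le_image_sub_of_le_deriv
    (fun y hy => (hf y hy).continuousAt.continuousWithinAt)
    (fun y hy => (hf y (interior_subset hy)).differentiableWithinAt)
    (fun y hy => hC y (by rwa [interior_Ici] at hy)) x₁ self_mem_Ici x hx hx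

theorem ConvexOn.map_le_mul_deriv {f : ℝ → ℝ} (hf : ConvexOn ℝ univ f) (h0 : f 0 = 0) {z : ℝ}
    (hz : DifferentiableAt ℝ f z) : f z ≤ z * deriv f z := by
  rcases lt_trichotomy z 0 with hneg | rfl | hpos
  · have h := hf.deriv_le_slope (mem_univ z) (mem_univ 0) hneg hz
    rw [slope_def_field, h0, zero_sub, zero_sub, neg_div_neg_eq, le_div_iff_of_neg hneg] at h
    linarith
  · simp [h0]
  · have h := hf.slope_le_deriv (mem_univ 0) (mem_univ z) hpos hz
    rw [slope_def_field, h0, sub_zero, sub_zero, div_le_iff₀ hpos] at h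
    linarith

theorem false_of_deriv_le_neg_mul_sq {g : ℝ → ℝ} (hg : Differentiable ℝ g) {x₁ k : ℝ}
    (hk : 0 < k) (hneg : ∀ x, x₁ ≤ x → g x < 0)
    (hderiv : ∀ x, x₁ ≤ x → deriv g x ≤ -k * g x ^ 2) : False := by
  have hinv : ∀ x, x₁ ≤ x → HasDerivAt (fun y => (g y)⁻¹) (-deriv g x / g x ^ 2) x :=
    fun x hx => (hg x).hasDerivAt.inv (hneg x hx).ne
  have hslope : ∀ x, x₁ ≤ x → k ≤ deriv (fun y => (g y)⁻¹) x := by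
    intro x hx
    rw [(hinv x hx).deriv, le_div_iff₀ (by nlinarith [hneg x hx])]
    linarith [hderiv x hx]
  set X := x₁ + (1 - (g x₁)⁻¹) / k
  have hX : x₁ ≤ X := le_add_of_nonneg_right
    (div_nonneg (by linarith [inv_lt_zero.mpr (hneg x₁ le_rfl)]) hk.le)
  have hgrowth := mul_sub_le_sub_of_le_deriv_Ici (fun x hx => (hinv x hx).differentiableAt)
    (fun x hx => hslope x hx.le) hX
  have hkX : k * (X - x₁) = 1 - (g x₁)⁻¹ := by simp only [X]; field_simp; ring
  linarith [inv_lt_zero.mpr (hneg X hX)]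

theorem hasDerivAt_neg_comp_neg {g : ℝ → ℝ} (hg : Differentiable ℝ g) (x : ℝ) :
    HasDerivAt (fun y => -g (-y)) (deriv g (-x)) x :=
  ((hg (-x)).hasDerivAt.comp x (hasDerivAt_neg x)).neg.congr_deriv (by ring)

namespace Assumption2

variable {F : ℝ → ℝ}

theorem nonneg (hF : Assumption2 F) (y : ℝ) : 0 ≤ F y := by
  have key : ∀ y, 0 ≤ y → 0 ≤ F y := fun y hy =>
    hF.map_zero ▸ hF.strictMonoOn.monotoneOn self_mem_Ici hy hy
  rcases le_total 0 y with hy | hy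
  · exact key y hy
  · simpa [hF.even] using key (-y) (neg_nonneg.mpr hy)

theorem map_abs (hF : Assumption2 F) (y : ℝ) : F |y| = F y := by
  rcases abs_choice y with h | h <;> simp [h, hF.even]

theorem monotone_deriv (hF : Assumption2 F) : Monotone (deriv F) := fun _ _ h =>
  hF.convex.monotoneOn_deriv (fun x _ => hF.diff x) (mem_univ _) (mem_univ _) h

theorem deriv_nonneg (hF : Assumption2 F) {y : ℝ} (hy : 0 ≤ y) : 0 ≤ deriv F y :=
  hF.deriv_zero ▸ hF.monotone_deriv hy

theorem deriv_nonpos (hF : Assumption2 F) {y : ℝ} (hy : y ≤ 0) : deriv F y ≤ 0 :=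
  hF.deriv_zero ▸ hF.monotone_deriv hy

theorem exists_mul_sub_le_deriv (hF : Assumption2 F) :
    ∃ C > 0, ∃ x₀ > 0, ∀ y, x₀ ≤ y → C * (y - x₀) ≤ deriv F y := by
  obtain ⟨C, hC, x₀, hx₀, hF''⟩ := hF.second_deriv_lb
  refine ⟨C, hC, x₀, hx₀, fun y hy => ?_⟩
  have h := mul_sub_le_sub_of_le_deriv_Ici (fun y hy => hF.deriv_diffOn y (hx₀.le.trans hy))
    (fun y hy => (hF'' y (by rwa [abs_of_pos (hx₀.trans hy)])).le) hy
  linarith [hF.deriv_nonneg hx₀.le]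

theorem exists_mul_sq_le (hF : Assumption2 F) :
    ∃ c > 0, ∃ R, ∀ y, R ≤ |y| → c * y ^ 2 ≤ F y := by
  obtain ⟨C, hC, x₀, hx₀, hF'⟩ := hF.exists_mul_sub_le_deriv
  refine ⟨C / 8, by positivity, 4 * x₀, fun y hy => ?_⟩
  rw [← hF.map_abs, ← sq_abs]
  set t := |y|
  have htan := hF.convex.deriv_le_slope (mem_univ (t / 2)) (mem_univ t) (by linarith)
    (hF.diff (t / 2))
  rw [slope_def_field, le_div_iff₀ (by linarith)] at htan
  have hmid := mul_le_mul_of_nonneg_right (hF' (t / 2) (by linarith))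
    (by linarith : (0 : ℝ) ≤ t / 2)
  nlinarith [hF.nonneg (t / 2), mul_nonneg (mul_nonneg hC.le (by linarith : (0 : ℝ) ≤ t / 2))
    (by linarith : (0 : ℝ) ≤ t / 4 - x₀)]

end Assumption2

structure IsSignedSolution (F : ℝ → ℝ) (a b : ℝ) (g : ℝ → ℝ) : Prop where
  differentiable : Differentiable ℝ g
  deriv_eq : ∀ x, deriv g x = a * x ^ 2 - b - F (g x)
  mul_nonpos : ∀ x, x * g x ≤ 0

namespace IsSignedSolution

variable {F g : ℝ → ℝ} {a b : ℝ}

theorem nonpos (hg : IsSignedSolution F a b g) {x : ℝ} (hx : 0 ≤ x) : g x ≤ 0 := by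
  have hIoi : Ioi (0 : ℝ) ⊆ {x | g x ≤ 0} := fun x (hx : 0 < x) =>
    nonpos_of_mul_nonpos_right (hg.mul_nonpos x) hx
  have h := (isClosed_le hg.differentiable.continuous continuous_const).closure_subset_iff.mpr hIoi
  rw [closure_Ioi] at h
  exact h hx

theorem reflect (hF : ∀ x, F (-x) = F x) (hg : IsSignedSolution F a b g) :
    IsSignedSolution F a b (fun x => -g (-x)) where
  differentiable x := (hasDerivAt_neg_comp_neg hg.differentiable x).differentiableAt
  deriv_eq x := by
    rw [(hasDerivAt_neg_comp_neg hg.differentiable x).deriv, hg.deriv_eq, hF]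
    ring
  mul_nonpos x := by nlinarith [hg.mul_nonpos (-x)]

theorem hasDerivAt_deriv (hF : Differentiable ℝ F) (hg : IsSignedSolution F a b g) (x : ℝ) :
    HasDerivAt (deriv g) (2 * a * x - deriv F (g x) * deriv g x) x := by
  have h := (((hasDerivAt_pow 2 x).const_mul a).sub_const b).sub
    ((hF (g x)).hasDerivAt.comp x (hg.differentiable x).hasDerivAt)
  exact (h.congr_of_eventuallyEq (.of_forall hg.deriv_eq)).congr_deriv (by ring)

theorem exists_neg_mul_le (hF : Assumption2 F) (hg : IsSignedSolution F a b g) :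
    ∃ L > 0, ∀ x, 0 ≤ x → -(L * (1 + x)) ≤ g x := by
  obtain ⟨c, hc, R, hR⟩ := hF.exists_mul_sq_le
  set L := max (max 1 R) (2 * (|a| + |b| + 2) / c)
  have hL1 : 1 ≤ L := (le_max_left _ _).trans (le_max_left _ _)
  have hLR : R ≤ L := (le_max_right _ _).trans (le_max_left _ _)
  have hcL : (|a| + |b| + 2) * L ≤ c / 2 * L ^ 2 := by
    have h := le_max_right (max 1 R) (2 * (|a| + |b| + 2) / c)
    rw [div_le_iff₀ hc] at h
    nlinarith
  -- beyond the line `-L (1 + x)` the quadratic growth of `F` dominates `a x² - b`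
  have hriccati : ∀ x, 0 ≤ x → g x ≤ -(L * (1 + x)) → deriv g x ≤ -(c / 2) * g x ^ 2 := by
    intro x hx hgx
    have hFg := hR (g x) (by rw [abs_of_nonpos (by nlinarith)]; nlinarith)
    have hLx : 0 ≤ L * (1 + x) := by positivity
    have hsq : L ^ 2 * (1 + x ^ 2) ≤ g x ^ 2 := by
      nlinarith [mul_le_mul (le_neg.mpr hgx) (le_neg.mpr hgx) hLx (by linarith),
        mul_nonneg (mul_nonneg hLx hLx) hx]
    have hax : a * x ^ 2 ≤ |a| * x ^ 2 := mul_le_mul_of_nonneg_right (le_abs_self a) (sq_nonneg x)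
    rw [hg.deriv_eq]
    nlinarith [neg_abs_le b, abs_nonneg a, abs_nonneg b, sq_nonneg x,
      mul_le_mul_of_nonneg_right hcL (by positivity : (0 : ℝ) ≤ 1 + x ^ 2),
      mul_le_mul_of_nonneg_left hsq (by positivity : (0 : ℝ) ≤ c / 2),
      mul_nonneg (mul_nonneg (by positivity : (0 : ℝ) ≤ |a| + |b| + 2) (sub_nonneg.mpr hL1))
        (by positivity : (0 : ℝ) ≤ 1 + x ^ 2), mul_nonneg (abs_nonneg b) (sq_nonneg x)]
  refine ⟨L, by linarith, ?_⟩
  by_contra! ⟨x₁, hx₁, hgx₁⟩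
  have hline : ∀ x, HasDerivAt (fun x => -(L * (1 + x))) (-L) x := fun x =>
    (((hasDerivAt_id' x).const_add 1).const_mul L).neg.congr_deriv (by ring)
  have hbound : ∀ x, x₁ < x → g x = -(L * (1 + x)) → deriv g x < -L := by
    intro x hx hgx
    have hx0 : 0 ≤ x := hx₁.trans hx.le
    have hsq : L ^ 2 ≤ g x ^ 2 := by
      rw [hgx, neg_sq]
      exact pow_le_pow_left₀ (by linarith) (by nlinarith) 2
    nlinarith [hriccati x hx0 hgx.le, abs_nonneg a, abs_nonneg b,
      mul_le_mul_of_nonneg_left hsq (by positivity : (0 : ℝ) ≤ c / 2)]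
  have hbelow : ∀ x, x₁ ≤ x → g x ≤ -(L * (1 + x)) := fun x hx =>
    image_le_of_deriv_lt_deriv_boundary_Ici (fun x => (hg.differentiable x).hasDerivAt)
      hline hgx₁ hbound hx
  exact false_of_deriv_le_neg_mul_sq hg.differentiable (half_pos hc)
    (fun x hx => by nlinarith [hbelow x hx])
    (fun x hx => hriccati x (hx₁.trans hx) (hbelow x hx))

theorem deriv_nonpos (hF : Assumption2 F) (ha : 0 < a) (hg : IsSignedSolution F a b g) {x : ℝ}
    (hx : 0 ≤ x) : deriv g x ≤ 0 := by
  by_contra! hpos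
  obtain ⟨μ, hμ0, hμ⟩ := exists_between hpos
  have hbound : ∀ y, x < y → μ = deriv g y → 0 < 2 * a * y - deriv F (g y) * deriv g y := by
    intro y hy hμy
    rw [← hμy]
    nlinarith [hF.deriv_nonpos (hg.nonpos (hx.trans hy.le)), mul_pos ha (hx.trans_lt hy)]
  have habove : ∀ y, x ≤ y → μ ≤ deriv g y := fun y hy =>
    image_le_of_deriv_lt_deriv_boundary_Ici (fun _ => hasDerivAt_const _ μ)
      (hg.hasDerivAt_deriv hF.diff) hμ hbound hy
  set X := x + (1 - g x) / μ
  have hX : x ≤ X := le_add_of_nonneg_right (div_nonneg (by linarith [hg.nonpos hx]) hμ0.le)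
  have hgrowth := mul_sub_le_sub_of_le_deriv_Ici (fun y _ => hg.differentiable y)
    (fun y hy => habove y hy.le) hX
  have hμX : μ * (X - x) = 1 - g x := by simp only [X]; field_simp [hμ0.ne']; ring
  linarith [hg.nonpos (hx.trans hX)]

theorem neg_le_deriv (hF : Assumption2 F) (ha : 0 < a) (hg : IsSignedSolution F a b g) {L : ℝ}
    (hL0 : 0 ≤ L) (hL : ∀ x, 0 ≤ x → -(L * (1 + x)) ≤ g x) {x : ℝ} (hx : 0 ≤ x) :
    -(3 * L + |b| + a * L + 1) ≤ deriv g x := by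
  set μ := 3 * L + |b| + a * L + 1
  by_contra! hlt
  have hbound : ∀ y, x < y → deriv g y = -μ → 2 * a * y - deriv F (g y) * deriv g y < 0 := by
    intro y hy hgy
    have hy0 : 0 ≤ y := hx.trans hy.le
    have hFg : F (g y) = a * y ^ 2 - b + μ := by linarith [hg.deriv_eq y]
    have hslope := hF.convex.map_le_mul_deriv hF.map_zero (hF.diff (g y))
    have hLy := hL y hy0
    have hgneg : g y < 0 := (hg.nonpos hy0).lt_of_ne fun h => by
      rw [h, hF.map_zero] at hFg
      nlinarith [le_abs_self b, mul_nonneg ha.le (sq_nonneg y), mul_nonneg ha.le hL0]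
    -- `F(g) ≤ g F'(g)` with `g ≥ -L (1 + y)` forces `μ F'(g) < -2 a y`
    have hμF : 2 * a * y * (L * (1 + y)) < μ * F (g y) := by
      rw [hFg]
      nlinarith [le_abs_self b, mul_nonneg (mul_nonneg ha.le hL0) (sq_nonneg (y - 1)),
        mul_nonneg ha.le (sq_nonneg y), mul_nonneg (mul_nonneg ha.le hL0) (sq_nonneg y),
        mul_nonneg ha.le hL0, abs_nonneg b]
    rw [hgy]
    nlinarith [mul_le_mul_of_nonneg_left hslope (by positivity : (0 : ℝ) ≤ μ),
      mul_le_mul_of_nonneg_left (neg_le.mp hLy) (by positivity : (0 : ℝ) ≤ 2 * a * y)]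
  have hbelow : ∀ y, x ≤ y → deriv g y ≤ -μ := fun y hy =>
    image_le_of_deriv_lt_deriv_boundary_Ici (hg.hasDerivAt_deriv hF.diff)
      (fun _ => hasDerivAt_const _ (-μ)) hlt (fun y hy hgy => by simpa using hbound y hy hgy) hy
  have hμL : L < μ := by linarith [abs_nonneg b, mul_nonneg ha.le hL0]
  set X := x + (g x + L * (1 + x) + 1) / (μ - L)
  have hX : x ≤ X := le_add_of_nonneg_right (div_nonneg (by linarith [hL x hx]) (by linarith))
  have hdecay := mul_sub_le_sub_of_le_deriv_Ici (f := fun y => -g y) (C := μ)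
    (fun y _ => (hg.differentiable y).neg)
    (fun y hy => by rw [deriv.fun_neg]; linarith [hbelow y hy.le]) hX
  have hμX : (μ - L) * (X - x) = g x + L * (1 + x) + 1 := by
    simp only [X]; field_simp [(sub_pos.mpr hμL).ne']; ring
  linarith [hL X (hx.trans hX)]

theorem exists_bound_Ici (hF : Assumption2 F) (ha : 0 < a) (hg : IsSignedSolution F a b g) :
    ∃ K > 0, ∀ x, 0 ≤ x → |g x| ≤ K * (1 + x) ∧ |deriv g x| ≤ K := by
  obtain ⟨L, hL0, hL⟩ := hg.exists_neg_mul_le hF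
  have hμL : L ≤ 3 * L + |b| + a * L + 1 := by
    linarith [abs_nonneg b, mul_nonneg ha.le hL0.le]
  refine ⟨3 * L + |b| + a * L + 1, by linarith, fun x hx => ⟨?_, ?_⟩⟩
  · rw [abs_of_nonpos (hg.nonpos hx)]
    nlinarith [hL x hx]
  · rw [abs_of_nonpos (hg.deriv_nonpos hF ha hx)]
    linarith [hg.neg_le_deriv hF ha hL0.le hL hx]

end IsSignedSolution

/-- Lemma A.5 (bounds): the unique solution `g` on `ℝ` of `g' = a·x² − b_F − F(g)` with
`x·g(x) ≤ 0` satisfies `|g(x)| ≤ K(1+|x|)` and `|g'(x)| ≤ K` for some `K > 0`. -/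
theorem stmt13 (F : ℝ → ℝ) (hF : Assumption2 F) (a bF : ℝ) (ha : 0 < a) (g : ℝ → ℝ)
    (hg : Differentiable ℝ g)
    (hode : ∀ x : ℝ, deriv g x = a * x ^ 2 - bF - F (g x))
    (hsign : ∀ x : ℝ, x * g x ≤ 0) :
    ∃ K > (0 : ℝ), ∀ x : ℝ, |g x| ≤ K * (1 + |x|) ∧ |deriv g x| ≤ K := by
  have hsol : IsSignedSolution F a bF g := ⟨hg, hode, hsign⟩
  obtain ⟨K₁, hK₁, hright⟩ := hsol.exists_bound_Ici hF ha
  obtain ⟨K₂, -, hleft⟩ := (hsol.reflect hF.even).exists_bound_Ici hF ha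
  refine ⟨max K₁ K₂, lt_max_of_lt_left hK₁, fun x => ?_⟩
  rcases le_total 0 x with hx | hx
  · obtain ⟨hgx, hg'x⟩ := hright x hx
    rw [abs_of_nonneg hx]
    exact ⟨hgx.trans (mul_le_mul_of_nonneg_right (le_max_left _ _) (by linarith)),
      hg'x.trans (le_max_left _ _)⟩
  · obtain ⟨hgx, hg'x⟩ := hleft (-x) (neg_nonneg.mpr hx)
    rw [neg_neg, abs_neg] at hgx
    rw [(hasDerivAt_neg_comp_neg hg (-x)).deriv, neg_neg] at hg'x
    rw [abs_of_nonpos hx]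
    exact ⟨hgx.trans (mul_le_mul_of_nonneg_right (le_max_right _ _) (by linarith)),
      hg'x.trans (le_max_right _ _)⟩
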